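/- Fix an integer d' ≥ 1, α ∈ (0, 1/2) and β ∈ (1−α, 2α). Let Z : [0,1] → ℝ^{d'} and let A = (A_{i,j}) satisfy Chen's relation, and suppose ‖Z‖_α < ∞ and Γ_R < ∞. Then ‖A‖_{2α} ≤ Γ_R · 2/(1 − 2^{−2α}) + ‖Z‖_α² · 2^{1−α}/(1 − 2^{−α}). -/

import Mathlib

/-!
Work on the grid of mesh `2⁻ⁿ` with integer indices `k < l`. At each scale `2 ^ m`, round the
left end up and the right end down to multiples of `2 ^ (m + 1)`: by Chen's relation this peels
off at most one block of length `2 ^ m` at each end, plus two cross terms of size at most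
`‖Z‖_α² (2 ^ m)^α (l - k)^α`. A block of length `2 ^ m` is a single step of the grid of level
`n - m`, so the one-term sum `R^{n-m}` bounds it by `Γ_R (2 ^ m 2⁻ⁿ)^{2α}`. After
`J = ⌊log₂ (l - k)⌋` steps at most one block of length `2 ^ J ≤ l - k` is left, and the two
geometric series in `2 ^ (2α)` and `2 ^ α` give the constants.
-/

open Finset

/-- Dyadic rationals in `[0,1]`: points of the form `k / 2^n` with `0 ≤ k ≤ 2^n`. -/
def IsDyadic (x : ℝ) : Prop := ∃ n k : ℕ, k ≤ 2 ^ n ∧ x = (k : ℝ) / 2 ^ n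

def ChenRelation (N : ℕ) (a : ℕ → ℕ → ℝ) (x y : ℕ → ℝ) : Prop :=
  ∀ p q r, p ≤ q → q ≤ r → r ≤ N → a p r = a p q + a q r + (x q - x p) * (y r - y q)

def IsHolderOnGrid (N : ℕ) (K α : ℝ) (x : ℕ → ℝ) : Prop :=
  ∀ p q, p ≤ q → q ≤ N → |x q - x p| ≤ K * ((q : ℝ) - p) ^ α

def HasBlockBound (N : ℕ) (R α : ℝ) (a : ℕ → ℕ → ℝ) : Prop :=
  ∀ m c, (c + 1) * 2 ^ m ≤ N →
    |a (c * 2 ^ m) ((c + 1) * 2 ^ m)| ≤ R * ((2 : ℝ) ^ (2 * α)) ^ m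

lemma geom_sum_le_pow_div_sub_one {r : ℝ} (hr : 1 < r) (n : ℕ) :
    ∑ i ∈ range n, r ^ i ≤ r ^ n / (r - 1) := by
  rw [geom_sum_eq hr.ne']
  gcongr
  linarith

lemma IsHolderOnGrid.abs_mul_sub_le {N : ℕ} {K α : ℝ} {x y : ℕ → ℝ}
    (hx : IsHolderOnGrid N K α x) (hy : IsHolderOnGrid N K α y) {u v u' v' : ℕ}
    (hu : u ≤ v) (hv : v ≤ N) (hu' : u' ≤ v') (hv' : v' ≤ N) :
    |(x v - x u) * (y v' - y u')| ≤ K ^ 2 * (((v : ℝ) - u) ^ α * ((v' : ℝ) - u') ^ α) := by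
  have h := hx u v hu hv
  have h' := hy u' v' hu' hv'
  calc |(x v - x u) * (y v' - y u')| = |x v - x u| * |y v' - y u'| := abs_mul _ _
    _ ≤ (K * ((v : ℝ) - u) ^ α) * (K * ((v' : ℝ) - u') ^ α) :=
      mul_le_mul h h' (abs_nonneg _) ((abs_nonneg _).trans h)
    _ = _ := by ring

section PeelBound

variable (R K α : ℝ)

/-- The bound accumulated by `J` peeling steps from scale `2 ^ m` on, for an interval of
width `D`. -/
noncomputable def peelBound (D : ℝ) (m J : ℕ) : ℝ :=
  2 * R * (((2 : ℝ) ^ (2 * α)) ^ m * ∑ i ∈ range (J + 1), ((2 : ℝ) ^ (2 * α)) ^ i) +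
    2 * K ^ 2 * D ^ α * (((2 : ℝ) ^ α) ^ m * ∑ i ∈ range J, ((2 : ℝ) ^ α) ^ i)

variable {R K α}

lemma le_peelBound (hR : 0 ≤ R) {D : ℝ} (hD : 0 ≤ D) (m J : ℕ) :
    R * ((2 : ℝ) ^ (2 * α)) ^ m ≤ peelBound R K α D m J := by
  have hone : 1 ≤ ∑ i ∈ range (J + 1), ((2 : ℝ) ^ (2 * α)) ^ i := by
    rw [geom_sum_succ]
    exact le_add_of_nonneg_left (by positivity)
  have hpos : 0 ≤ R * ((2 : ℝ) ^ (2 * α)) ^ m :=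
    mul_nonneg hR (pow_nonneg (Real.rpow_nonneg zero_le_two (2 * α)) m)
  have hcross :
      0 ≤ 2 * K ^ 2 * D ^ α * (((2 : ℝ) ^ α) ^ m * ∑ i ∈ range J, ((2 : ℝ) ^ α) ^ i) := by
    have := Real.rpow_nonneg hD α
    positivity
  unfold peelBound
  nlinarith [mul_le_mul_of_nonneg_left hone hpos]

lemma peelBound_succ (D : ℝ) (m J : ℕ) :
    peelBound R K α D m (J + 1) = 2 * R * ((2 : ℝ) ^ (2 * α)) ^ m +
      2 * K ^ 2 * D ^ α * ((2 : ℝ) ^ α) ^ m + peelBound R K α D (m + 1) J := by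
  unfold peelBound
  rw [geom_sum_succ (n := J + 1), geom_sum_succ (x := (2 : ℝ) ^ α) (n := J)]
  ring

lemma peelBound_mono (hα : 0 ≤ α) {D D' : ℝ} (hD' : 0 ≤ D') (hD : D' ≤ D) (m J : ℕ) :
    peelBound R K α D' m J ≤ peelBound R K α D m J := by
  unfold peelBound
  gcongr

lemma peelBound_zero_le (hα : 0 < α) (hR : 0 ≤ R) {D : ℝ} {J : ℕ}
    (hJ : (2 : ℝ) ^ J ≤ D) :
    peelBound R K α D 0 J ≤
      (R * 2 / (1 - (2 : ℝ) ^ (-(2 * α))) +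
        K ^ 2 * (2 : ℝ) ^ (1 - α) / (1 - (2 : ℝ) ^ (-α))) * D ^ (2 * α) := by
  have hD : 0 < D := lt_of_lt_of_le (by positivity) hJ
  have hρ : 1 < (2 : ℝ) ^ (2 * α) := Real.one_lt_rpow one_lt_two (by positivity)
  have hσ : 1 < (2 : ℝ) ^ α := Real.one_lt_rpow one_lt_two hα
  have hρJ : ((2 : ℝ) ^ (2 * α)) ^ J ≤ D ^ (2 * α) := by
    rw [Real.rpow_pow_comm zero_le_two]
    exact Real.rpow_le_rpow (by positivity) hJ (by positivity)
  have hσJ : ((2 : ℝ) ^ α) ^ J ≤ D ^ α := by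
    rw [Real.rpow_pow_comm zero_le_two]
    exact Real.rpow_le_rpow (by positivity) hJ hα.le
  have hR' : R * 2 / (1 - (2 : ℝ) ^ (-(2 * α))) =
      2 * R * (2 : ℝ) ^ (2 * α) / ((2 : ℝ) ^ (2 * α) - 1) := by
    rw [Real.rpow_neg zero_le_two]
    field_simp
  have hK' : K ^ 2 * (2 : ℝ) ^ (1 - α) / (1 - (2 : ℝ) ^ (-α)) =
      2 * K ^ 2 / ((2 : ℝ) ^ α - 1) := by
    rw [Real.rpow_neg zero_le_two, Real.rpow_sub two_pos, Real.rpow_one]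
    field_simp
  have hDα : D ^ (2 * α) = D ^ α * D ^ α := by rw [two_mul, Real.rpow_add hD]
  have hDα0 : 0 ≤ D ^ α := Real.rpow_nonneg hD.le _
  simp only [peelBound, pow_zero, one_mul]
  calc _ ≤ 2 * R * (((2 : ℝ) ^ (2 * α)) ^ (J + 1) / ((2 : ℝ) ^ (2 * α) - 1)) +
          2 * K ^ 2 * D ^ α * (((2 : ℝ) ^ α) ^ J / ((2 : ℝ) ^ α - 1)) := by
        gcongr
        · exact geom_sum_le_pow_div_sub_one hρ _
        · exact geom_sum_le_pow_div_sub_one hσ _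
    _ = 2 * R * (2 : ℝ) ^ (2 * α) / ((2 : ℝ) ^ (2 * α) - 1) * ((2 : ℝ) ^ (2 * α)) ^ J +
          2 * K ^ 2 / ((2 : ℝ) ^ α - 1) * (D ^ α * ((2 : ℝ) ^ α) ^ J) := by ring
    _ ≤ 2 * R * (2 : ℝ) ^ (2 * α) / ((2 : ℝ) ^ (2 * α) - 1) * D ^ (2 * α) +
          2 * K ^ 2 / ((2 : ℝ) ^ α - 1) * (D ^ α * D ^ α) := by
      have : 0 < (2 : ℝ) ^ (2 * α) - 1 := by linarith
      have : 0 < (2 : ℝ) ^ α - 1 := by linarith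
      gcongr
    _ = _ := by rw [hR', hK', hDα]; ring

end PeelBound

namespace ChenRelation

variable {N : ℕ} {a : ℕ → ℕ → ℝ} {x y : ℕ → ℝ}

lemma apply_self (h : ChenRelation N a x y) {p : ℕ} (hp : p ≤ N) : a p p = 0 := by
  have := h p p p le_rfl le_rfl hp
  simp only [sub_self, zero_mul, add_zero] at this
  linarith

lemma abs_le_add_of_holder (h : ChenRelation N a x y) {K α : ℝ} (hα : 0 ≤ α)
    (hx : IsHolderOnGrid N K α x) (hy : IsHolderOnGrid N K α y)
    {p p' q' q : ℕ} (hp : p ≤ p') (hpq : p' ≤ q') (hq : q' ≤ q) (hqN : q ≤ N) {w : ℝ}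
    (hpw : (p' : ℝ) - p ≤ w) (hqw : (q : ℝ) - q' ≤ w) :
    |a p q| ≤ |a p p'| + |a p' q'| + |a q' q| + 2 * K ^ 2 * ((q : ℝ) - p) ^ α * w ^ α := by
  have hp_le : (p : ℝ) ≤ p' := by exact_mod_cast hp
  have hpq_le : (p' : ℝ) ≤ q' := by exact_mod_cast hpq
  have hq_le : (q' : ℝ) ≤ q := by exact_mod_cast hq
  have hleft := hx.abs_mul_sub_le hy hp (by omega) (hpq.trans hq) hqN
  have hright := hx.abs_mul_sub_le hy hpq (by omega) hq hqN
  have hpow : ∀ {s t : ℝ}, 0 ≤ s → s ≤ t → s ^ α ≤ t ^ α := fun hs hst =>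
    Real.rpow_le_rpow hs hst hα
  have hw : ((p' : ℝ) - p) ^ α * ((q : ℝ) - p') ^ α ≤ ((q : ℝ) - p) ^ α * w ^ α := by
    rw [mul_comm (((q : ℝ) - p) ^ α)]
    exact mul_le_mul (hpow (by linarith) hpw) (hpow (by linarith) (by linarith))
      (Real.rpow_nonneg (by linarith) _) (Real.rpow_nonneg (by linarith) _)
  have hw' : ((q' : ℝ) - p') ^ α * ((q : ℝ) - q') ^ α ≤ ((q : ℝ) - p) ^ α * w ^ α :=
    mul_le_mul (hpow (by linarith) (by linarith)) (hpow (by linarith) hqw)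
      (Real.rpow_nonneg (by linarith) _) (Real.rpow_nonneg (by linarith) _)
  rw [h p p' q hp (hpq.trans hq) hqN, h p' q' q hpq hq hqN]
  have hK : 0 ≤ K ^ 2 := sq_nonneg K
  have := abs_add_three (a p p') (a p' q' + a q' q + (x q' - x p') * (y q - y q'))
    ((x p' - x p) * (y q - y p'))
  have := abs_add_three (a p' q') (a q' q) ((x q' - x p') * (y q - y q'))
  linarith [mul_le_mul_of_nonneg_left hw hK, mul_le_mul_of_nonneg_left hw' hK]

lemma abs_le_of_le_succ (h : ChenRelation N a x y) {R α : ℝ} (hR : 0 ≤ R)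
    (hblock : HasBlockBound N R α a)
    {m c d : ℕ} (hcd : c ≤ d) (hdc : d ≤ c + 1) (hdN : d * 2 ^ m ≤ N) :
    |a (c * 2 ^ m) (d * 2 ^ m)| ≤ R * ((2 : ℝ) ^ (2 * α)) ^ m := by
  obtain rfl | rfl : d = c ∨ d = c + 1 := by omega
  · rw [h.apply_self hdN, abs_zero]
    positivity
  · exact hblock m c hdN

lemma abs_le_peelBound (h : ChenRelation N a x y) {K R α : ℝ} (hα : 0 ≤ α)
    (hx : IsHolderOnGrid N K α x) (hy : IsHolderOnGrid N K α y) (hR : 0 ≤ R)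
    (hblock : HasBlockBound N R α a) (J : ℕ) :
    ∀ m c d, c ≤ d → d < c + 2 ^ (J + 1) → d * 2 ^ m ≤ N →
      |a (c * 2 ^ m) (d * 2 ^ m)| ≤
        peelBound R K α (((d * 2 ^ m : ℕ) : ℝ) - (c * 2 ^ m : ℕ)) m J := by
  have hcast : ∀ {m c d : ℕ}, c ≤ d → ((c * 2 ^ m : ℕ) : ℝ) ≤ ((d * 2 ^ m : ℕ) : ℝ) :=
    fun hcd => by exact_mod_cast Nat.mul_le_mul_right _ hcd
  have hnear : ∀ {m c d : ℕ} (J : ℕ), c ≤ d → d ≤ c + 1 → d * 2 ^ m ≤ N →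
      |a (c * 2 ^ m) (d * 2 ^ m)| ≤
        peelBound R K α (((d * 2 ^ m : ℕ) : ℝ) - (c * 2 ^ m : ℕ)) m J :=
    fun J hcd hdc hdN => (h.abs_le_of_le_succ hR hblock hcd hdc hdN).trans
      (le_peelBound hR (sub_nonneg.mpr (hcast hcd)) _ J)
  induction J with
  | zero => exact fun m c d hcd hdc hdN => hnear 0 hcd (by omega) hdN
  | succ J ih =>
    intro m c d hcd hdc hdN
    rcases le_or_gt d (c + 1) with hdc' | hcd'
    · exact hnear _ hcd hdc' hdN
    -- round `c` up and `d` down to even numbers: the inner interval is one scale coarser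
    set c' := (c + 1) / 2
    set d' := d / 2
    have hc : c ≤ 2 * c' ∧ 2 * c' ≤ c + 1 := by omega
    have hd : 2 * d' ≤ d ∧ d ≤ 2 * d' + 1 := by omega
    have hcd'' : 2 * c' ≤ 2 * d' := by omega
    have hdN' : (2 * d') * 2 ^ m ≤ N := (Nat.mul_le_mul_right _ hd.1).trans hdN
    have h2m : ∀ e : ℕ, e * 2 ^ (m + 1) = (2 * e) * 2 ^ m := fun e => by ring
    have hinner := ih (m + 1) c' d' (by omega) (by rw [pow_succ] at hdc; omega) (by rwa [h2m])
    rw [h2m, h2m] at hinner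
    have hleft := h.abs_le_of_le_succ hR hblock hc.1 hc.2
      ((Nat.mul_le_mul_right _ hcd'').trans hdN')
    have hright := h.abs_le_of_le_succ hR hblock hd.1 hd.2 hdN
    have hwidth : ∀ {e f : ℕ}, f ≤ e + 1 →
        ((f * 2 ^ m : ℕ) : ℝ) - (e * 2 ^ m : ℕ) ≤ 2 ^ m := by
      intro e f hfe
      have : ((f * 2 ^ m : ℕ) : ℝ) ≤ ((e + 1) * 2 ^ m : ℕ) := hcast hfe
      push_cast at this ⊢
      linarith
    have hsplit := h.abs_le_add_of_holder hα hx hy (Nat.mul_le_mul_right _ hc.1)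
      (Nat.mul_le_mul_right _ hcd'') (Nat.mul_le_mul_right _ hd.1) hdN
      (hwidth hc.2) (hwidth hd.2)
    rw [← Real.rpow_pow_comm zero_le_two] at hsplit
    set D : ℝ := ((d * 2 ^ m : ℕ) : ℝ) - (c * 2 ^ m : ℕ)
    have hshrink := peelBound_mono (R := R) (K := K) (D := D) hα
      (sub_nonneg.mpr (hcast (m := m) hcd''))
      (by linarith [hcast (m := m) hc.1, hcast (m := m) hd.1]) (m + 1) J
    linarith [peelBound_succ (R := R) (K := K) (α := α) D m J]

theorem abs_le_mul_rpow (h : ChenRelation N a x y) {K R α : ℝ} (hα : 0 < α)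
    (hx : IsHolderOnGrid N K α x) (hy : IsHolderOnGrid N K α y) (hR : 0 ≤ R)
    (hblock : HasBlockBound N R α a)
    {k l : ℕ} (hkl : k ≤ l) (hlN : l ≤ N) :
    |a k l| ≤ (R * 2 / (1 - (2 : ℝ) ^ (-(2 * α))) +
      K ^ 2 * (2 : ℝ) ^ (1 - α) / (1 - (2 : ℝ) ^ (-α))) * ((l : ℝ) - k) ^ (2 * α) := by
  rcases hkl.eq_or_lt with rfl | hlt
  · rw [h.apply_self hlN, sub_self, Real.zero_rpow (by positivity), abs_zero, mul_zero]
  set J := Nat.log 2 (l - k)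
  have hJ : 2 ^ J ≤ l - k := Nat.pow_log_le_self 2 (by omega)
  have hJ' : l - k < 2 ^ (J + 1) := Nat.lt_pow_succ_log_self one_lt_two _
  have hchain := h.abs_le_peelBound hα.le hx hy hR hblock J 0 k l hkl (by omega) (by simpa)
  simp only [pow_zero, mul_one] at hchain
  refine hchain.trans (peelBound_zero_le hα hR ?_)
  have : ((2 ^ J : ℕ) : ℝ) ≤ ((l - k : ℕ) : ℝ) := by exact_mod_cast hJ
  push_cast [hkl] at this
  exact this

end ChenRelation

lemma chenRelation_dyadicGrid (n : ℕ) {A : ℝ → ℝ → ℝ} {z w : ℝ → ℝ}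
    (hChen : ∀ r s t : ℝ, IsDyadic r → IsDyadic s → IsDyadic t → r ≤ s → s ≤ t →
      A r t = A r s + A s t + (z s - z r) * (w t - w s)) :
    ChenRelation (2 ^ n) (fun p q => A (p / 2 ^ n) (q / 2 ^ n)) (fun p => z (p / 2 ^ n))
      (fun p => w (p / 2 ^ n)) := by
  intro p q r hpq hqr hrN
  have hdy : ∀ {p : ℕ}, p ≤ 2 ^ n → IsDyadic ((p : ℝ) / 2 ^ n) := fun hp => ⟨n, _, hp, rfl⟩
  exact hChen _ _ _ (hdy (by omega)) (hdy (by omega)) (hdy hrN)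
    (by gcongr) (by gcongr)

lemma isHolderOnGrid_dyadicGrid {ι : Type*} [Fintype ι] {Z : ℝ → ι → ℝ} {KZ α : ℝ}
    (hα : 0 < α) (n : ℕ) (hZ : ∀ k l : ℕ, k < l → l ≤ 2 ^ n →
      ‖Z ((l : ℝ) / 2 ^ n) - Z ((k : ℝ) / 2 ^ n)‖ ≤ KZ * (((l : ℝ) - k) / 2 ^ n) ^ α) (i : ι) :
    IsHolderOnGrid (2 ^ n) (KZ * (((2 : ℝ) ^ n)⁻¹) ^ α) α (fun p => Z (p / 2 ^ n) i) := by
  intro p q hpq hqN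
  rcases hpq.eq_or_lt with rfl | hlt
  · simp [Real.zero_rpow hα.ne']
  calc |Z (q / 2 ^ n) i - Z (p / 2 ^ n) i| ≤ ‖Z (q / 2 ^ n) - Z (p / 2 ^ n)‖ :=
        norm_le_pi_norm (Z (q / 2 ^ n) - Z (p / 2 ^ n)) i
    _ ≤ KZ * (((q : ℝ) - p) / 2 ^ n) ^ α := hZ p q hlt hqN
    _ = KZ * (((2 : ℝ) ^ n)⁻¹) ^ α * ((q : ℝ) - p) ^ α := by
      rw [div_eq_mul_inv, Real.mul_rpow (sub_nonneg.mpr (by exact_mod_cast hpq)) (by positivity)]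
      ring

lemma hasBlockBound_dyadicGrid {A : ℝ → ℝ → ℝ} {KR α β : ℝ} (n : ℕ)
    (hR : ∀ n l m : ℕ, l < m → m ≤ 2 ^ n →
      |∑ k ∈ Finset.Ico l m, A ((k : ℝ) / 2 ^ n) (((k : ℝ) + 1) / 2 ^ n)| ≤
        KR * (((m : ℝ) - l) / 2 ^ n) ^ β * (((2 : ℝ) ^ n)⁻¹) ^ (2 * α - β)) :
    HasBlockBound (2 ^ n) (KR * (((2 : ℝ) ^ n)⁻¹) ^ (2 * α)) α
      (fun p q => A (p / 2 ^ n) (q / 2 ^ n)) := by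
  intro m c hc
  have hmn : m ≤ n := (Nat.pow_le_pow_iff_right one_lt_two).mp
    ((Nat.le_mul_of_pos_left _ c.succ_pos).trans hc)
  have hsplit : (2 : ℝ) ^ n = 2 ^ (n - m) * 2 ^ m := by
    rw [← pow_add, Nat.sub_add_cancel hmn]
  have hc' : c + 1 ≤ 2 ^ (n - m) := by
    rw [← Nat.pow_div hmn two_pos]
    exact (Nat.le_div_iff_mul_le (by positivity)).mpr hc
  have h := hR (n - m) c (c + 1) c.lt_succ_self hc'
  rw [Nat.Ico_succ_singleton, Finset.sum_singleton] at h
  have hstep : (((c + 1 : ℕ) : ℝ) - c) / 2 ^ (n - m) = ((2 : ℝ) ^ (n - m))⁻¹ := by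
    push_cast; ring
  rw [hstep, mul_assoc, ← Real.rpow_add (by positivity), add_sub_cancel] at h
  have hleft : ((c * 2 ^ m : ℕ) : ℝ) / 2 ^ n = c / 2 ^ (n - m) := by
    push_cast; rw [hsplit]; field_simp
  have hright : (((c + 1) * 2 ^ m : ℕ) : ℝ) / 2 ^ n = (c + 1) / 2 ^ (n - m) := by
    push_cast; rw [hsplit]; field_simp
  have hscale : KR * (((2 : ℝ) ^ n)⁻¹) ^ (2 * α) * ((2 : ℝ) ^ (2 * α)) ^ m =
      KR * (((2 : ℝ) ^ (n - m))⁻¹) ^ (2 * α) := by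
    rw [hsplit, mul_inv, Real.mul_rpow (by positivity) (by positivity),
      Real.rpow_pow_comm zero_le_two, mul_assoc, mul_assoc,
      ← Real.mul_rpow (by positivity) (by positivity), inv_mul_cancel₀ (by positivity),
      Real.one_rpow, mul_one]
  dsimp only
  rwa [hleft, hright, hscale]

theorem A_2alpha_bound_general
    (d' : ℕ)
    (α β : ℝ) (hα1 : 0 < α)
    (Z : ℝ → Fin d' → ℝ)
    (A : Fin d' → Fin d' → ℝ → ℝ → ℝ)
    -- Chen's relation
    (hChen : ∀ (i j : Fin d') (r s t : ℝ), IsDyadic r → IsDyadic s → IsDyadic t →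
      r ≤ s → s ≤ t →
      A i j r t = A i j r s + A i j s t + (Z s i - Z r i) * (Z t j - Z s j))
    (KZ KR : ℝ)
    -- `‖Z‖_α ≤ K_Z` (finiteness of `‖Z‖_α`)
    (hZ : ∀ n k l : ℕ, k < l → l ≤ 2 ^ n →
      ‖Z ((l : ℝ) / 2 ^ n) - Z ((k : ℝ) / 2 ^ n)‖ ≤ KZ * (((l : ℝ) - k) / 2 ^ n) ^ α)
    -- `Γ_R ≤ K_R` (finiteness of `Γ_R`)
    (hR : ∀ (i j : Fin d') (n l m : ℕ), l < m → m ≤ 2 ^ n →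
      |∑ k ∈ Finset.Ico l m, A i j ((k : ℝ) / 2 ^ n) (((k : ℝ) + 1) / 2 ^ n)| ≤
        KR * (((m : ℝ) - l) / 2 ^ n) ^ β * (((2 : ℝ) ^ n)⁻¹) ^ (2 * α - β)) :
    ∀ (i j : Fin d') (n k l : ℕ), k < l → l ≤ 2 ^ n →
      |A i j ((k : ℝ) / 2 ^ n) ((l : ℝ) / 2 ^ n)| ≤
        (KR * 2 / (1 - (2 : ℝ) ^ (-(2 * α))) +
          KZ ^ 2 * (2 : ℝ) ^ (1 - α) / (1 - (2 : ℝ) ^ (-α))) *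
        (((l : ℝ) - k) / 2 ^ n) ^ (2 * α) := by
  intro i j n k l hkl hln
  have hKR : 0 ≤ KR := by
    have := (abs_nonneg _).trans (hR i j 0 0 1 one_pos le_rfl)
    simpa using this
  have h := (chenRelation_dyadicGrid n (hChen i j)).abs_le_mul_rpow hα1
    (isHolderOnGrid_dyadicGrid hα1 n (hZ n) i) (isHolderOnGrid_dyadicGrid hα1 n (hZ n) j)
    (by positivity) (hasBlockBound_dyadicGrid n (hR i j)) hkl.le hln
  have hδ : (0 : ℝ) ≤ (l : ℝ) - k := sub_nonneg.mpr (by exact_mod_cast hkl.le)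
  have hsq : ((((2 : ℝ) ^ n)⁻¹) ^ α) ^ 2 = (((2 : ℝ) ^ n)⁻¹) ^ (2 * α) := by
    rw [← Real.rpow_natCast, ← Real.rpow_mul (by positivity), mul_comm]
    norm_num
  have hscale : (((l : ℝ) - k) / 2 ^ n) ^ (2 * α) =
      ((l : ℝ) - k) ^ (2 * α) * (((2 : ℝ) ^ n)⁻¹) ^ (2 * α) := by
    rw [div_eq_mul_inv, Real.mul_rpow hδ (by positivity)]
  rw [hscale]
  convert h using 1
  rw [mul_pow, hsq]
  ring

/-- **Lemma (bound on `‖A‖_{2α}` in terms of `Γ_R` and `‖Z‖_α`).**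
Fix `d' ≥ 1`, `α ∈ (0,1/2)` and `β ∈ (1−α,2α)`. If `A` satisfies Chen's relation with
respect to `Z` and `‖Z‖_α ≤ K_Z < ∞`, `Γ_R ≤ K_R < ∞`, then
`‖A‖_{2α} ≤ K_R·2/(1−2^{−2α}) + K_Z²·2^{1−α}/(1−2^{−α})`, i.e. for all levels `n` and
grid indices `k < l ≤ 2ⁿ` and all `i, j`,
`|A_{i,j}(t_kⁿ, t_lⁿ)| ≤ (K_R·2/(1−2^{−2α}) + K_Z²·2^{1−α}/(1−2^{−α}))·(t_lⁿ−t_kⁿ)^{2α}`. -/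
theorem A_2alpha_bound
    (d' : ℕ) (hd' : 1 ≤ d')
    (α β : ℝ) (hα1 : 0 < α) (hα2 : α < 1 / 2)
    (hβ1 : 1 - α < β) (hβ2 : β < 2 * α)
    (Z : ℝ → Fin d' → ℝ)
    (A : Fin d' → Fin d' → ℝ → ℝ → ℝ)
    -- Chen's relation
    (hChen : ∀ (i j : Fin d') (r s t : ℝ), IsDyadic r → IsDyadic s → IsDyadic t →
      r ≤ s → s ≤ t →
      A i j r t = A i j r s + A i j s t + (Z s i - Z r i) * (Z t j - Z s j))
    (KZ KR : ℝ)
    -- `‖Z‖_α ≤ K_Z` (finiteness of `‖Z‖_α`)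
    (hZ : ∀ n k l : ℕ, k < l → l ≤ 2 ^ n →
      ‖Z ((l : ℝ) / 2 ^ n) - Z ((k : ℝ) / 2 ^ n)‖ ≤ KZ * (((l : ℝ) - k) / 2 ^ n) ^ α)
    -- `Γ_R ≤ K_R` (finiteness of `Γ_R`)
    (hR : ∀ (i j : Fin d') (n l m : ℕ), l < m → m ≤ 2 ^ n →
      |∑ k ∈ Finset.Ico l m, A i j ((k : ℝ) / 2 ^ n) (((k : ℝ) + 1) / 2 ^ n)| ≤
        KR * (((m : ℝ) - l) / 2 ^ n) ^ β * (((2 : ℝ) ^ n)⁻¹) ^ (2 * α - β)) :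
    ∀ (i j : Fin d') (n k l : ℕ), k < l → l ≤ 2 ^ n →
      |A i j ((k : ℝ) / 2 ^ n) ((l : ℝ) / 2 ^ n)| ≤
        (KR * 2 / (1 - (2 : ℝ) ^ (-(2 * α))) +
          KZ ^ 2 * (2 : ℝ) ^ (1 - α) / (1 - (2 : ℝ) ^ (-α))) *
        (((l : ℝ) - k) / 2 ^ n) ^ (2 * α) :=
  A_2alpha_bound_general d' α β hα1 Z A hChen KZ KR hZ hR
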